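/- Let A be a *-algebra acting on a Hilbert space H, φ a weight, and (H, π, Λ) a GNS triple with π(a)Λ(b) = Λ(ab) and ⟨Λ(a), Λ(b)⟩ = φ(b*a). If W* is a linear operator on H ⊗ H (algebraic tensor product of Λ-images) defined by W*(Λ(a) ⊗ Λ(b)) = (Λ⊗Λ)(Δ(b)(a⊗1)) for a coproduct Δ that is an algebra homomorphism, then W*(1 ⊗ π(x))W = π⊗π(Δ(x)) on the span of Λ(a)⊗Λ(b), i.e., W*(1⊗x)(Λ(f)⊗Λ(g)) = Δ(x)·W*(Λ(f)⊗Λ(g)) for all x, f, g ∈ A. -/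

import Mathlib

/-! Since `Δ` is multiplicative, `W*(Λ f ⊗ Λ (x g)) = (Λ ⊗ Λ)(Δ x · Δ g (f ⊗ 1))`, and `Λ ⊗ Λ`
turns left multiplication by `Δ x` on `A ⊗ A` into the action of `(π ⊗ π)(Δ x)`. -/

open TensorProduct

theorem TensorProduct.homTensorHomMap_map_map_apply_map_map {R A M : Type*} [CommSemiring R]
    [Semiring A] [Algebra R A] [AddCommMonoid M] [Module R M]
    (Λ : A →ₗ[R] M) (π : A →ₐ[R] Module.End R M) (hπ : ∀ a b : A, π a (Λ b) = Λ (a * b))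
    (u t : A ⊗[R] A) :
    homTensorHomMap (RingHom.id R) M M M M (map π.toLinearMap π.toLinearMap u) (map Λ Λ t) =
      map Λ Λ (u * t) := by
  induction u using TensorProduct.induction_on with
  | zero => simp
  | add u₁ u₂ h₁ h₂ => simp only [map_add, LinearMap.add_apply, add_mul, h₁, h₂]
  | tmul a b =>
    induction t using TensorProduct.induction_on with
    | zero => simp
    | add t₁ t₂ h₁ h₂ => simp only [mul_add, map_add, h₁, h₂]
    | tmul c d => simp [Algebra.TensorProduct.tmul_mul_tmul, hπ]

theorem stmt_10_general {A : Type*} [Ring A] [Algebra ℂ A]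
    {H : Type*} [NormedAddCommGroup H] [InnerProductSpace ℂ H]
    (Δ : A →ₐ[ℂ] (A ⊗[ℂ] A))
    (Λ : A →ₗ[ℂ] H) (π : A →ₐ[ℂ] Module.End ℂ H)
    (hπ : ∀ a b : A, π a (Λ b) = Λ (a * b))
    (Wstar : H ⊗[ℂ] H →ₗ[ℂ] H ⊗[ℂ] H)
    (hW : ∀ a b : A,
      Wstar (Λ a ⊗ₜ[ℂ] Λ b) = TensorProduct.map Λ Λ (Δ b * (a ⊗ₜ[ℂ] 1))) :
    ∀ x f g : A,
      Wstar (TensorProduct.map LinearMap.id (π x) (Λ f ⊗ₜ[ℂ] Λ g)) =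
        TensorProduct.homTensorHomMap (RingHom.id ℂ) H H H H
            (TensorProduct.map π.toLinearMap π.toLinearMap (Δ x))
          (Wstar (Λ f ⊗ₜ[ℂ] Λ g)) := by
  intro x f g
  rw [map_tmul, LinearMap.id_apply, hπ, hW, hW,
    homTensorHomMap_map_map_apply_map_map Λ π hπ, map_mul Δ, mul_assoc]

/-- GNS intertwining identity: if `W*(Λ(a)⊗Λ(b)) = (Λ⊗Λ)(Δ(b)(a⊗1))`, then
`W*(1⊗π(x))(Λ(f)⊗Λ(g)) = (π⊗π)(Δ(x)) · W*(Λ(f)⊗Λ(g))` for all `x, f, g ∈ A`. -/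
theorem stmt_10 {A : Type*} [Ring A] [Algebra ℂ A] [StarRing A]
    {H : Type*} [NormedAddCommGroup H] [InnerProductSpace ℂ H]
    (Δ : A →ₐ[ℂ] (A ⊗[ℂ] A))
    (Λ : A →ₗ[ℂ] H) (π : A →ₐ[ℂ] Module.End ℂ H) (φ : A →ₗ[ℂ] ℂ)
    (hdense : DenseRange ⇑Λ)
    (hπ : ∀ a b : A, π a (Λ b) = Λ (a * b))
    (hip : ∀ a b : A, (inner ℂ (Λ a) (Λ b) : ℂ) = φ (star b * a))
    (Wstar : H ⊗[ℂ] H →ₗ[ℂ] H ⊗[ℂ] H)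
    (hW : ∀ a b : A,
      Wstar (Λ a ⊗ₜ[ℂ] Λ b) = TensorProduct.map Λ Λ (Δ b * (a ⊗ₜ[ℂ] 1))) :
    ∀ x f g : A,
      Wstar (TensorProduct.map LinearMap.id (π x) (Λ f ⊗ₜ[ℂ] Λ g)) =
        TensorProduct.homTensorHomMap (RingHom.id ℂ) H H H H
            (TensorProduct.map π.toLinearMap π.toLinearMap (Δ x))
          (Wstar (Λ f ⊗ₜ[ℂ] Λ g)) :=
  stmt_10_general Δ Λ π hπ Wstar hW
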